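/- arXiv:1310.4519 — 2 statements merged into one kernel-verified Lean document; each statement's English description precedes it below -/
import Mathlib

section
/- The sum $h^n_1 \otimes h^n_1 + \sum_{k=2}^n h^n_k \otimes h^n_k + \sum_{k\neq j} f^n_{k,j} \otimes f^n_{k,j}$ over all generalized Gell-Mann matrices (including the normalized identity $h^n_1$) equals $2P$, where $P = \sum_{k,j=1}^n e_{jk} \otimes e_{kj}$ is the permutation (swap) matrix on $\mathbb{C}^n \otimes \mathbb{C}^n$. -/
open Matrix Kronecker

/-- Diagonal generalized Gell-Mann matrices over ℂ (0-based index; `k = 0` gives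
`h^n_1 = √(2/n)·I`). -/
noncomputable def gellMannDiagC (n : ℕ) (k : Fin n) : Matrix (Fin n) (Fin n) ℂ :=
  if k.val = 0 then
    (Real.sqrt (2 / (n : ℝ)) : ℂ) • ∑ i : Fin n, single i i (1 : ℂ)
  else
    (Real.sqrt (2 / (((k.val : ℝ) + 1) * (k.val : ℝ))) : ℂ) •
        ∑ i ∈ Finset.univ.filter (fun i : Fin n => i.val < k.val), single i i (1 : ℂ)
      - (Real.sqrt (2 - 2 / ((k.val : ℝ) + 1)) : ℂ) • single k k (1 : ℂ)

/-- Off-diagonal generalized Gell-Mann matrices. -/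
noncomputable def gellMannOffC (n : ℕ) (k j : Fin n) : Matrix (Fin n) (Fin n) ℂ :=
  if k < j then single k j (1 : ℂ) + single j k (1 : ℂ)
  else (-Complex.I) • (single j k (1 : ℂ) - single k j (1 : ℂ))

open Finset

/- The diagonal matrices `h_k` contribute a diagonal matrix with entries `∑_k d_k(a) d_k(b)`, where
`d_k(a)` is the `a`-th diagonal entry of `h_k`; these column inner products equal `2 δ_ab`. For
`a ≤ b` only `k = 1`, `k = b` and `k > b` contribute, and the last terms telescope:
`∑_{b < k ≤ n} 2/(k(k-1)) = 2/b - 2/n`. Off the diagonal,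
`f_{kj} ⊗ f_{kj} + f_{jk} ⊗ f_{jk} = 2 (e_jk ⊗ e_kj + e_kj ⊗ e_jk)`: the terms `e_kj ⊗ e_kj` and
`e_jk ⊗ e_jk` cancel because `(-i)² = -1`. -/

/-- `gellMannDiagCoeff n k a` is the `a`-th diagonal entry of `h^n_{k+1}` (all indices 0-based). -/
noncomputable def gellMannDiagCoeff (n k a : ℕ) : ℝ :=
  if k = 0 then √(2 / n)
  else if a < k then √(2 / ((k + 1) * k))
  else if a = k then -√(2 - 2 / (k + 1))
  else 0

theorem gellMannDiagC_eq_diagonal (n : ℕ) (k : Fin n) :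
    gellMannDiagC n k = diagonal fun a : Fin n => (gellMannDiagCoeff n k a : ℂ) := by
  have hsum : ∑ i ∈ univ.filter (fun i : Fin n => i.val < k.val), single i i (1 : ℂ) =
      diagonal fun i => if i.val < k.val then 1 else 0 := by
    rw [sum_filter, ← sum_single_eq_diagonal]
    exact sum_congr rfl fun i _ => by split_ifs <;> simp
  unfold gellMannDiagC
  split_ifs with hk
  · rw [sum_single_one, smul_one_eq_diagonal]
    simp [gellMannDiagCoeff, hk]
  · rw [hsum, ← diagonal_single, ← diagonal_smul, ← diagonal_smul, diagonal_sub]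
    congr 1
    ext a
    rcases lt_trichotomy a k with h | rfl | h
    · simp [gellMannDiagCoeff, hk, h, h.ne]
    · simp [gellMannDiagCoeff, hk]
    · simp [gellMannDiagCoeff, hk, h.not_gt, h.ne', Fin.val_injective.ne h.ne',
        Fin.lt_def.not.mp h.not_gt]

theorem sum_Ico_two_div_succ_mul {m n : ℕ} (hm : 1 ≤ m) (hmn : m ≤ n) :
    ∑ k ∈ Ico m n, 2 / (((k : ℝ) + 1) * k) = 2 / m - 2 / n := by
  have htel := sum_Ico_sub (fun k : ℕ => -(2 / (k : ℝ))) hmn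
  simp only [Nat.cast_add, Nat.cast_one, sub_neg_eq_add, neg_add_eq_sub] at htel
  rw [← htel]
  refine sum_congr rfl fun k hk => ?_
  have hk0 : (k : ℝ) ≠ 0 := Nat.cast_ne_zero.mpr (by have := (mem_Ico.mp hk).1; omega)
  field_simp
  ring

theorem sqrt_two_div_mul_sqrt_two_sub {b : ℝ} (hb : 0 < b) :
    √(2 / ((b + 1) * b)) * √(2 - 2 / (b + 1)) = 2 / (b + 1) := by
  have hsq : 2 / ((b + 1) * b) * (2 - 2 / (b + 1)) = (2 / (b + 1)) ^ 2 := by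
    field_simp
    ring
  rw [← Real.sqrt_mul (by positivity), hsq, Real.sqrt_sq (by positivity)]

section gellMannDiagCoeff

variable {n k a b : ℕ}

theorem gellMannDiagCoeff_of_ne_zero_of_lt (hk : k ≠ 0) (hkb : k < b) :
    gellMannDiagCoeff n k b = 0 := by
  simp [gellMannDiagCoeff, hk, hkb.not_gt, hkb.ne']

theorem gellMannDiagCoeff_mul_of_lt (hak : a < k) (hbk : b < k) :
    gellMannDiagCoeff n k a * gellMannDiagCoeff n k b = 2 / ((k + 1) * k) := by
  simp only [gellMannDiagCoeff, Nat.ne_zero_of_lt hak, if_false, hak, hbk, if_true]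
  exact Real.mul_self_sqrt (by positivity)

theorem gellMannDiagCoeff_mul_self_of_lt (hab : a < b) :
    gellMannDiagCoeff n b a * gellMannDiagCoeff n b b = -(2 / (b + 1)) := by
  have hb : (0 : ℝ) < b := by exact_mod_cast Nat.zero_lt_of_lt hab
  simp only [gellMannDiagCoeff, Nat.ne_zero_of_lt hab, if_false, hab, lt_irrefl, if_true, mul_neg]
  rw [sqrt_two_div_mul_sqrt_two_sub hb]

theorem gellMannDiagCoeff_self_mul_self (hb : b ≠ 0) :
    gellMannDiagCoeff n b b * gellMannDiagCoeff n b b = 2 - 2 / (b + 1) := by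
  have : (2 : ℝ) / (b + 1) ≤ 2 := div_le_self zero_le_two (by simp)
  simp only [gellMannDiagCoeff, hb, if_false, lt_irrefl, if_true, neg_mul_neg]
  exact Real.mul_self_sqrt (by linarith)

theorem sum_gellMannDiagCoeff_mul_of_le (hab : a ≤ b) (hbn : b < n) :
    ∑ k ∈ range n, gellMannDiagCoeff n k a * gellMannDiagCoeff n k b =
      if a = b then 2 else 0 := by
  have hzero : gellMannDiagCoeff n 0 a * gellMannDiagCoeff n 0 b = 2 / n := by
    simp only [gellMannDiagCoeff, if_true]
    exact Real.mul_self_sqrt (by positivity)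
  have htail : ∑ k ∈ Ico (b + 1) n, gellMannDiagCoeff n k a * gellMannDiagCoeff n k b =
      2 / (b + 1) - 2 / n := by
    have hsum := sum_Ico_two_div_succ_mul (m := b + 1) (by omega) hbn
    push_cast at hsum
    rw [← hsum]
    exact sum_congr rfl fun k hk => by
      have := (mem_Ico.mp hk).1
      rw [gellMannDiagCoeff_mul_of_lt (by omega) (by omega)]
  rw [← sum_range_add_sum_Ico _ (by omega : b + 1 ≤ n), htail]
  obtain rfl | hb := eq_or_ne b 0
  · obtain rfl : a = 0 := by omega
    rw [sum_range_one, hzero, if_pos rfl]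
    ring
  have hmiddle : ∑ k ∈ Ico 1 b, gellMannDiagCoeff n k a * gellMannDiagCoeff n k b = 0 :=
    sum_eq_zero fun k hk => by
      have := mem_Ico.mp hk
      rw [gellMannDiagCoeff_of_ne_zero_of_lt (by omega) this.2, mul_zero]
  rw [sum_range_succ, sum_range_eq_add_Ico _ (by omega), hmiddle, hzero]
  obtain hab | rfl := hab.lt_or_eq
  · rw [gellMannDiagCoeff_mul_self_of_lt hab, if_neg hab.ne]
    ring
  · rw [gellMannDiagCoeff_self_mul_self hb, if_pos rfl]
    ring

theorem sum_gellMannDiagCoeff_mul (ha : a < n) (hb : b < n) :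
    ∑ k ∈ range n, gellMannDiagCoeff n k a * gellMannDiagCoeff n k b =
      if a = b then 2 else 0 := by
  obtain hab | hba := le_total a b
  · exact sum_gellMannDiagCoeff_mul_of_le hab hb
  · simp_rw [mul_comm (gellMannDiagCoeff n _ a), sum_gellMannDiagCoeff_mul_of_le hba ha, eq_comm]

end gellMannDiagCoeff

theorem sum_gellMannDiagC_kronecker_self (n : ℕ) :
    ∑ k : Fin n, gellMannDiagC n k ⊗ₖ gellMannDiagC n k =
      (2 : ℂ) • ∑ k : Fin n, single k k (1 : ℂ) ⊗ₖ single k k (1 : ℂ) := by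
  have hsum_diagonal (d : Fin n → Fin n × Fin n → ℂ) : ∑ k, diagonal (d k) = diagonal (∑ k, d k) :=
    (map_sum (diagonalAddMonoidHom _ ℂ) d univ).symm
  simp_rw [gellMannDiagC_eq_diagonal, ← diagonal_single, diagonal_kronecker_diagonal,
    hsum_diagonal, ← diagonal_smul]
  congr 1
  ext ⟨a, b⟩
  have hcoeff : ∑ k : Fin n, (gellMannDiagCoeff n k a : ℂ) * gellMannDiagCoeff n k b =
      if a = b then 2 else 0 := by
    have h := sum_gellMannDiagCoeff_mul (n := n) a.isLt b.isLt
    rw [← Fin.sum_univ_eq_sum_range (fun k => gellMannDiagCoeff n k a * gellMannDiagCoeff n k b)]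
      at h
    simpa [Fin.val_inj, apply_ite Complex.ofReal] using congrArg Complex.ofReal h
  simp [Pi.single_apply, hcoeff]

theorem sum_filter_ne_eq_sum_filter_lt_add_swap {ι M : Type*} [LinearOrder ι] [Fintype ι]
    [AddCommMonoid M] (g : ι × ι → M) :
    ∑ p ∈ univ.filter (fun p : ι × ι => p.1 ≠ p.2), g p =
      ∑ p ∈ univ.filter (fun p : ι × ι => p.1 < p.2), (g p + g p.swap) := by
  have hswap : ∑ p ∈ univ.filter (fun p : ι × ι => p.2 < p.1), g p =
      ∑ p ∈ univ.filter (fun p : ι × ι => p.1 < p.2), g p.swap :=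
    (sum_equiv (Equiv.prodComm ι ι) (by simp) (by simp)).symm
  rw [sum_add_distrib, ← hswap, ← sum_union (disjoint_filter.mpr fun p _ h => h.not_gt)]
  congr 1
  ext p
  simp [lt_or_lt_iff_ne]

theorem sum_filter_fst_eq_snd {ι M : Type*} [Fintype ι] [DecidableEq ι] [AddCommMonoid M]
    (g : ι × ι → M) :
    ∑ p ∈ univ.filter (fun p : ι × ι => p.1 = p.2), g p = ∑ i, g (i, i) := by
  rw [sum_filter, Fintype.sum_prod_type]
  simp

theorem Matrix.sub_kronecker {l m n p α : Type*} [NonUnitalNonAssocRing α]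
    (A B : Matrix l m α) (C : Matrix n p α) : (A - B) ⊗ₖ C = A ⊗ₖ C - B ⊗ₖ C := by
  ext
  simp [sub_mul]

theorem Matrix.kronecker_sub {l m n p α : Type*} [NonUnitalNonAssocRing α]
    (A : Matrix l m α) (B C : Matrix n p α) : A ⊗ₖ (B - C) = A ⊗ₖ B - A ⊗ₖ C := by
  ext
  simp [mul_sub]

theorem gellMannOffC_kronecker_self_add_swap {n : ℕ} {k j : Fin n} (h : k < j) :
    gellMannOffC n k j ⊗ₖ gellMannOffC n k j + gellMannOffC n j k ⊗ₖ gellMannOffC n j k =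
      (2 : ℂ) • (single j k (1 : ℂ) ⊗ₖ single k j (1 : ℂ)
        + single k j (1 : ℂ) ⊗ₖ single j k (1 : ℂ)) := by
  have hI : -Complex.I * -Complex.I = -1 := by simp
  rw [gellMannOffC, gellMannOffC, if_pos h, if_neg h.not_gt, smul_kronecker, kronecker_smul,
    smul_smul, hI]
  simp only [add_kronecker, kronecker_add, sub_kronecker, kronecker_sub]
  module

theorem sum_gellMannOffC_kronecker_self (n : ℕ) :
    ∑ p ∈ univ.filter (fun p : Fin n × Fin n => p.1 ≠ p.2),
        gellMannOffC n p.1 p.2 ⊗ₖ gellMannOffC n p.1 p.2 =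
      (2 : ℂ) • ∑ p ∈ univ.filter (fun p : Fin n × Fin n => p.1 ≠ p.2),
        single p.2 p.1 (1 : ℂ) ⊗ₖ single p.1 p.2 (1 : ℂ) := by
  rw [sum_filter_ne_eq_sum_filter_lt_add_swap, sum_filter_ne_eq_sum_filter_lt_add_swap, smul_sum]
  exact sum_congr rfl fun p hp => gellMannOffC_kronecker_self_add_swap (mem_filter.mp hp).2

theorem stmt2_general (n : ℕ) :
    (∑ k : Fin n, gellMannDiagC n k ⊗ₖ gellMannDiagC n k)
      + ∑ p ∈ Finset.univ.filter (fun p : Fin n × Fin n => p.1 ≠ p.2),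
          gellMannOffC n p.1 p.2 ⊗ₖ gellMannOffC n p.1 p.2
    = (2 : ℂ) • ∑ k : Fin n, ∑ j : Fin n,
        single j k (1 : ℂ) ⊗ₖ single k j (1 : ℂ) := by
  rw [sum_gellMannDiagC_kronecker_self, sum_gellMannOffC_kronecker_self, ← smul_add,
    ← Fintype.sum_prod_type', ← sum_filter_add_sum_filter_not univ (fun p : Fin n × Fin n => p.1 = p.2),
    sum_filter_fst_eq_snd]

/-- The full sum over all generalized Gell-Mann matrices (including `h^n_1`) of
`t ⊗ t` equals `2P`, the doubled permutation matrix. -/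
theorem stmt2 (n : ℕ) (hn : 1 ≤ n) :
    (∑ k : Fin n, gellMannDiagC n k ⊗ₖ gellMannDiagC n k)
      + ∑ p ∈ Finset.univ.filter (fun p : Fin n × Fin n => p.1 ≠ p.2),
          gellMannOffC n p.1 p.2 ⊗ₖ gellMannOffC n p.1 p.2
    = (2 : ℂ) • ∑ k : Fin n, ∑ j : Fin n,
        single j k (1 : ℂ) ⊗ₖ single k j (1 : ℂ) :=
  stmt2_general n
end

section
/- Let $A, B \in Sp(2n,\mathbb{R})$ and let $\chi$ be the defect matrix $\chi = \sum_{1\le i<j\le n}(e_{i,j+n}\otimes e_{i+n,j} + e_{j,i+n}\otimes e_{j+n,i} + e_{j+n,i}\otimes e_{j,i+n} + e_{i+n,j}\otimes e_{i,j+n} - e_{ij}\otimes e_{i+n,j+n} - e_{j+n,i+n}\otimes e_{ji} - e_{ji}\otimes e_{j+n,i+n} - e_{i+n,j+n}\otimes e_{ij}) + \sum_{1\le k\le n}(e_{k,n+k}\otimes e_{n+k,k} + e_{n+k,k}\otimes e_{k,n+k} - e_{kk}\otimes e_{k+n,k+n} - e_{k+n,k+n}\otimes e_{kk})$. Then $\operatorname{tr}_{12}[(A\otimes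 B)\chi] = -\operatorname{tr}(AB^{-1})$. -/
/-!
Expanding `χ` in matrix units and using `tr[(A ⊗ B)(e_{ab} ⊗ e_{cd})] = A_{ba} B_{dc}`, the left-hand
side is `∑ A_{xy} J_{yz} B_{wz} J_{wx} = tr(A J Bᵀ J)` for arbitrary `A, B`: the terms of `χ` are
exactly the `e_{yx} ⊗ e_{zw}` with `J_{yz} J_{wx} ≠ 0`, with that sign. For symplectic `B`,
`B⁻¹ = -J Bᵀ J` since `J² = -1`.
-/

open Matrix Kronecker

/-- The standard symplectic form on `ℝ^{2n}`, indexed by `Fin n ⊕ Fin n`. -/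
noncomputable def sympJ (n : ℕ) : Matrix (Fin n ⊕ Fin n) (Fin n ⊕ Fin n) ℝ :=
  fromBlocks 0 1 (-1) 0

/-- Matrix unit for `2n × 2n` matrices indexed by `Fin n ⊕ Fin n`: index `Sum.inl i`
corresponds to `i` and `Sum.inr i` to `i + n`. -/
noncomputable def E2n (n : ℕ) (a b : Fin n ⊕ Fin n) : Matrix (Fin n ⊕ Fin n) (Fin n ⊕ Fin n) ℝ :=
  Matrix.single a b 1

/-- The `Sp(2n,ℝ)` defect matrix `χ`. -/
noncomputable def sympDefect (n : ℕ) :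
    Matrix ((Fin n ⊕ Fin n) × (Fin n ⊕ Fin n)) ((Fin n ⊕ Fin n) × (Fin n ⊕ Fin n)) ℝ :=
  (∑ p ∈ Finset.univ.filter (fun p : Fin n × Fin n => p.1 < p.2),
      (E2n n (Sum.inl p.1) (Sum.inr p.2) ⊗ₖ E2n n (Sum.inr p.1) (Sum.inl p.2)
        + E2n n (Sum.inl p.2) (Sum.inr p.1) ⊗ₖ E2n n (Sum.inr p.2) (Sum.inl p.1)
        + E2n n (Sum.inr p.2) (Sum.inl p.1) ⊗ₖ E2n n (Sum.inl p.2) (Sum.inr p.1)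
        + E2n n (Sum.inr p.1) (Sum.inl p.2) ⊗ₖ E2n n (Sum.inl p.1) (Sum.inr p.2)
        - E2n n (Sum.inl p.1) (Sum.inl p.2) ⊗ₖ E2n n (Sum.inr p.1) (Sum.inr p.2)
        - E2n n (Sum.inr p.2) (Sum.inr p.1) ⊗ₖ E2n n (Sum.inl p.2) (Sum.inl p.1)
        - E2n n (Sum.inl p.2) (Sum.inl p.1) ⊗ₖ E2n n (Sum.inr p.2) (Sum.inr p.1)
        - E2n n (Sum.inr p.1) (Sum.inr p.2) ⊗ₖ E2n n (Sum.inl p.1) (Sum.inl p.2)))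
    + ∑ k : Fin n,
        (E2n n (Sum.inl k) (Sum.inr k) ⊗ₖ E2n n (Sum.inr k) (Sum.inl k)
          + E2n n (Sum.inr k) (Sum.inl k) ⊗ₖ E2n n (Sum.inl k) (Sum.inr k)
          - E2n n (Sum.inl k) (Sum.inl k) ⊗ₖ E2n n (Sum.inr k) (Sum.inr k)
          - E2n n (Sum.inr k) (Sum.inr k) ⊗ₖ E2n n (Sum.inl k) (Sum.inl k))

theorem Finset.sum_filter_lt_add_sum_diag {ι M : Type*} [Fintype ι] [LinearOrder ι]
    [AddCommMonoid M] (f : ι → ι → M) :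
    (∑ p ∈ univ.filter (fun p : ι × ι => p.1 < p.2), (f p.1 p.2 + f p.2 p.1))
      + ∑ k, f k k = ∑ i, ∑ j, f i j := by
  have h_gt : ∑ p ∈ univ.filter (fun p : ι × ι => p.1 < p.2), f p.2 p.1
      = ∑ p ∈ univ.filter (fun p : ι × ι => p.2 < p.1), f p.1 p.2 :=
    Finset.sum_nbij' Prod.swap Prod.swap (by simp) (by simp) (by simp) (by simp) (by simp)
  have h_diag : ∑ k, f k k = ∑ p ∈ univ.filter (fun p : ι × ι => p.1 = p.2), f p.1 p.2 := by
    rw [Finset.sum_filter, Fintype.sum_prod_type]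
    simp
  rw [Finset.sum_add_distrib, h_gt, h_diag, ← Fintype.sum_prod_type', Finset.sum_filter,
    Finset.sum_filter, Finset.sum_filter, ← Finset.sum_add_distrib, ← Finset.sum_add_distrib]
  refine Finset.sum_congr rfl fun p _ => ?_
  rcases lt_trichotomy p.1 p.2 with h | h | h
  · simp [h, h.not_gt, h.ne]
  · simp [h]
  · simp [h, h.not_gt, h.ne']

theorem Matrix.trace_kronecker_mul_single_kronecker_single {R l m : Type*} [CommSemiring R]
    [Fintype l] [Fintype m] [DecidableEq l] [DecidableEq m]
    (A : Matrix l l R) (B : Matrix m m R) (a b : l) (c d : m) :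
    ((A ⊗ₖ B) * (single a b 1 ⊗ₖ single c d 1)).trace = A b a * B d c := by
  rw [← mul_kronecker_mul, trace_kronecker, trace_mul_single, trace_mul_single]
  simp

/-- The `(i, k)` part of `χ`; the terms of `χ` indexed by `i < j` are the parts `(i, j)` and
`(j, i)`, and those indexed by `k` the part `(k, k)`. -/
noncomputable def defectBlock (n : ℕ) (i k : Fin n) :
    Matrix ((Fin n ⊕ Fin n) × (Fin n ⊕ Fin n)) ((Fin n ⊕ Fin n) × (Fin n ⊕ Fin n)) ℝ :=
  E2n n (Sum.inl i) (Sum.inr k) ⊗ₖ E2n n (Sum.inr i) (Sum.inl k)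
    + E2n n (Sum.inr i) (Sum.inl k) ⊗ₖ E2n n (Sum.inl i) (Sum.inr k)
    - E2n n (Sum.inl i) (Sum.inl k) ⊗ₖ E2n n (Sum.inr i) (Sum.inr k)
    - E2n n (Sum.inr i) (Sum.inr k) ⊗ₖ E2n n (Sum.inl i) (Sum.inl k)

theorem sympDefect_eq_sum_defectBlock (n : ℕ) :
    sympDefect n = ∑ i, ∑ k, defectBlock n i k := by
  rw [← Finset.sum_filter_lt_add_sum_diag]
  refine congrArg₂ (· + ·) (Finset.sum_congr rfl fun p _ => ?_) rfl
  simp only [defectBlock]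
  abel

theorem trace_kronecker_mul_defectBlock (n : ℕ) (A B : Matrix (Fin n ⊕ Fin n) (Fin n ⊕ Fin n) ℝ)
    (i k : Fin n) :
    ((A ⊗ₖ B) * defectBlock n i k).trace =
      A (Sum.inr k) (Sum.inl i) * B (Sum.inl k) (Sum.inr i)
        + A (Sum.inl k) (Sum.inr i) * B (Sum.inr k) (Sum.inl i)
        - A (Sum.inl k) (Sum.inl i) * B (Sum.inr k) (Sum.inr i)
        - A (Sum.inr k) (Sum.inr i) * B (Sum.inl k) (Sum.inl i) := by
  simp only [defectBlock, E2n, Matrix.mul_add, Matrix.mul_sub, trace_add, trace_sub,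
    trace_kronecker_mul_single_kronecker_single]

theorem trace_mul_sympJ_mul_transpose_mul_sympJ (n : ℕ)
    (A B : Matrix (Fin n ⊕ Fin n) (Fin n ⊕ Fin n) ℝ) :
    (A * sympJ n * Bᵀ * sympJ n).trace = ∑ k, ∑ i,
      (A (Sum.inr k) (Sum.inl i) * B (Sum.inl k) (Sum.inr i)
        + A (Sum.inl k) (Sum.inr i) * B (Sum.inr k) (Sum.inl i)
        - A (Sum.inl k) (Sum.inl i) * B (Sum.inr k) (Sum.inr i)
        - A (Sum.inr k) (Sum.inr i) * B (Sum.inl k) (Sum.inl i)) := by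
  simp only [trace, sympJ, diag_apply, mul_apply, Fintype.sum_sum_type, transpose_apply,
    fromBlocks_apply₁₁, fromBlocks_apply₁₂, fromBlocks_apply₂₁, fromBlocks_apply₂₂,
    Matrix.zero_apply, Matrix.neg_apply, one_apply, mul_zero, mul_neg, mul_ite, mul_one, neg_mul,
    Finset.sum_const_zero, Finset.sum_neg_distrib, Finset.sum_ite_eq', Finset.mem_univ,
    ↓reduceIte, zero_add, add_zero, neg_add_rev, neg_neg, Finset.sum_add_distrib,
    Finset.sum_sub_distrib]
  ring

theorem trace_kronecker_mul_sympDefect (n : ℕ) (A B : Matrix (Fin n ⊕ Fin n) (Fin n ⊕ Fin n) ℝ) :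
    ((A ⊗ₖ B) * sympDefect n).trace = (A * sympJ n * Bᵀ * sympJ n).trace := by
  simp only [sympDefect_eq_sum_defectBlock, Matrix.mul_sum, trace_sum,
    trace_kronecker_mul_defectBlock, trace_mul_sympJ_mul_transpose_mul_sympJ]
  exact Finset.sum_comm

theorem sympJ_eq_neg_J (n : ℕ) : sympJ n = -J (Fin n) ℝ := by
  simp [sympJ, J, fromBlocks_neg]

theorem inv_eq_neg_sympJ_mul_transpose_mul_sympJ {n : ℕ}
    {B : Matrix (Fin n ⊕ Fin n) (Fin n ⊕ Fin n) ℝ} (hB : Bᵀ * sympJ n * B = sympJ n) :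
    B⁻¹ = -(sympJ n * Bᵀ * sympJ n) := by
  rw [sympJ_eq_neg_J, Matrix.mul_neg, Matrix.neg_mul, neg_inj] at hB
  rw [SymplecticGroup.inv_eq_symplectic_inv B (SymplecticGroup.mem_iff'.2 hB), sympJ_eq_neg_J]
  simp

theorem stmt11_general (n : ℕ) (A B : Matrix (Fin n ⊕ Fin n) (Fin n ⊕ Fin n) ℝ)
    (hB : Bᵀ * sympJ n * B = sympJ n) :
    ((A ⊗ₖ B) * sympDefect n).trace = -(A * B⁻¹).trace := by
  rw [trace_kronecker_mul_sympDefect, inv_eq_neg_sympJ_mul_transpose_mul_sympJ hB, Matrix.mul_neg,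
    trace_neg, neg_neg, Matrix.mul_assoc, Matrix.mul_assoc, Matrix.mul_assoc]

/-- For `A, B ∈ Sp(2n,ℝ)` and the defect matrix `χ`: `tr₁₂[(A⊗B)χ] = -tr(AB⁻¹)`. -/
theorem stmt11 (n : ℕ) (A B : Matrix (Fin n ⊕ Fin n) (Fin n ⊕ Fin n) ℝ)
    (hA : Aᵀ * sympJ n * A = sympJ n) (hB : Bᵀ * sympJ n * B = sympJ n) :
    ((A ⊗ₖ B) * sympDefect n).trace = -(A * B⁻¹).trace :=
  stmt11_general n A B hB
end
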